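/- arXiv:math/0506137 — 5 statements merged into one kernel-verified Lean document; each statement's English description precedes it below -/
import Mathlib

section
/- Let M be a monoid with unique left inverses and let H be a finitely generated group, generated as a monoid by a finite set X. Then the word problem of H with respect to X is accepted by some deterministic M-automaton over X if and only if H has a subgroup of finite index that admits an injective group homomorphism into the group of units G(M) of M. -/
/-- A monoid `M` has *unique left inverses* if whenever `b * a = 1 = c * a` we have `b = c`. -/
def UniqueLeftInverses (M : Type) [Monoid M] : Prop :=
  ∀ a b c : M, b * a = 1 → c * a = 1 → b = c

/-- The word problem of a group `H`, generated as a monoid by the image of `φ : X → H`,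
is the set of words over `X` representing the identity of `H`. -/
def wordProblem {H : Type} [Group H] {X : Type} (φ : X → H) : Set (List X) :=
  {w | (w.map φ).prod = 1}

/-- A deterministic `M`-automaton over the alphabet `X`: a finite directed graph with
a distinguished initial state, a set of terminal states, and edges labelled by pairs in
`M × X`, such that each state has at most one outgoing edge per letter of `X`. -/
structure DetMAutomaton (M : Type) [Monoid M] (X : Type) where
  State : Type
  [stateFintype : Fintype State]
  init : State
  terminal : Set State
  edge : State → M × X → State → Prop
  det : ∀ ⦃p : State⦄ ⦃x : X⦄ ⦃g h : M⦄ ⦃q r : State⦄,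
      edge p (g, x) q → edge p (h, x) r → g = h ∧ q = r

namespace DetMAutomaton

variable {M : Type} [Monoid M] {X : Type}

/-- `A.Path p m w q` means there is a path from `p` to `q` labelled `(m, w)`: the
`X`-components of its edge labels spell out `w` in order, and the `M`-components
multiply in order to `m`. -/
inductive Path (A : DetMAutomaton M X) : A.State → M → List X → A.State → Prop
  | nil (p : A.State) : Path A p 1 [] p
  | cons {p q r : A.State} {g h : M} {x : X} {w : List X} :
      A.edge p (g, x) q → Path A q h w r → Path A p (g * h) (x :: w) r

/-- The language accepted by a deterministic `M`-automaton: all words `w` such that some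
path labelled `(1, w)` leads from the initial state to a terminal state. -/
def Lang (A : DetMAutomaton M X) : Set (List X) :=
  {w | ∃ q ∈ A.terminal, A.Path A.init 1 w q}

/-- A deterministic `M`-automaton is *deterministic terminal state minimal* (DTSM) if no
deterministic `M`-automaton accepting the same language has strictly fewer terminal states. -/
def DTSM (A : DetMAutomaton M X) : Prop :=
  ∀ B : DetMAutomaton M X, B.Lang = A.Lang → Nat.card A.terminal ≤ Nat.card B.terminal

end DetMAutomaton

/-! A deterministic `M`-automaton accepting the word problem has a state `q` that is reached
from the initial state along a relator labelled `1` and that can be re-entered in the same way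
from every state it so reaches. The pairs `(w̄, m)` of loops `q → q` labelled `(m, w)` form a
submonoid of `H × M`; its projection to `H` is a subgroup of finite index (cosets are detected by
the finitely many states reached from `q`), and by unique left inverses it is the graph of a
homomorphism into `M`, injective because a loop labelled `1` reads a relator. Conversely, an
embedding `f` of a finite-index subgroup `K` gives an automaton on the cosets of `K` that records
in the `M`-component the image under `f` of the current element, corrected by coset
representatives. -/

theorem exists_rel_forall_rel_imp_rel_of_finite {α : Type*} [Finite α] {r : α → α → Prop}
    (hrefl : ∀ a, r a a) (htrans : ∀ a b c, r a b → r b c → r a c) (a : α) :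
    ∃ b, r a b ∧ ∀ c, r b c → r c b := by
  let _ : Preorder α := { le := r, le_refl := hrefl, le_trans := htrans }
  obtain ⟨b, hab, -, hb⟩ := Finite.exists_le_maximal (p := fun _ : α => True) (a := a) trivial
  exact ⟨b, hab, fun c hbc => hb trivial hbc⟩

theorem Subgroup.finiteIndex_of_eq_imp_inv_mul_mem {G T : Type*} [Group G] [Finite T]
    (K : Subgroup G) (ψ : G → T) (hψ : ∀ g h, ψ g = ψ h → g⁻¹ * h ∈ K) : K.FiniteIndex := by
  have : Finite (G ⧸ K) := Finite.of_injective (fun C : G ⧸ K => ψ C.out) fun C C' he => by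
    rw [← QuotientGroup.out_eq' C, ← QuotientGroup.out_eq' C']
    exact QuotientGroup.eq.2 (hψ _ _ he)
  exact Subgroup.finiteIndex_of_finite_quotient

theorem Submonoid.exists_subgroup_injective_toUnits {H M : Type*} [Group H] [Monoid M]
    (S : Submonoid (H × M)) (hinv : ∀ p ∈ S, ∃ m, (p.1⁻¹, m) ∈ S)
    (hfun : ∀ h m m', (h, m) ∈ S → (h, m') ∈ S → m = m')
    (hker : ∀ h, (h, 1) ∈ S → h = 1) :
    ∃ K : Subgroup H, (∀ h, h ∈ K ↔ ∃ m, (h, m) ∈ S) ∧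
      ∃ f : K →* Mˣ, Function.Injective f := by
  let K : Subgroup H :=
    { carrier := {h | ∃ m, (h, m) ∈ S}
      one_mem' := ⟨1, S.one_mem⟩
      mul_mem' := fun ⟨m, hm⟩ ⟨m', hm'⟩ => ⟨m * m', S.mul_mem hm hm'⟩
      inv_mem' := fun ⟨_, hm⟩ => hinv _ hm }
  choose g hg using fun k : K => k.2
  let f : K →* M :=
    { toFun := g
      map_one' := hfun _ _ _ (hg 1) S.one_mem
      map_mul' := fun a b => hfun _ _ _ (hg (a * b)) (S.mul_mem (hg a) (hg b)) }
  refine ⟨K, fun _ => Iff.rfl, f.toHomUnits, (injective_iff_map_eq_one _).2 fun k hk => ?_⟩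
  have hgk : g k = 1 := congrArg Units.val hk
  exact Subtype.ext (hker k (hgk ▸ hg k))

@[simp]
theorem mem_wordProblem {H : Type} [Group H] {X : Type} {φ : X → H} {w : List X} :
    w ∈ wordProblem φ ↔ (w.map φ).prod = 1 :=
  Iff.rfl

namespace DetMAutomaton

variable {M : Type} [Monoid M] {X : Type} {A : DetMAutomaton M X}

theorem Path.unique {p q q' : A.State} {m m' : M} {w : List X}
    (h : A.Path p m w q) (h' : A.Path p m' w q') : m = m' ∧ q = q' := by
  induction h generalizing m' q' with
  | nil => cases h'; exact ⟨rfl, rfl⟩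
  | cons e _ ih =>
    cases h' with
    | cons e' hp' =>
      obtain ⟨rfl, rfl⟩ := A.det e e'
      obtain ⟨rfl, rfl⟩ := ih hp'
      exact ⟨rfl, rfl⟩

theorem Path.append {p q r : A.State} {m n : M} {w v : List X}
    (h₁ : A.Path p m w q) (h₂ : A.Path q n v r) : A.Path p (m * n) (w ++ v) r := by
  induction h₁ with
  | nil => simpa using h₂
  | cons e _ ih =>
    rw [List.cons_append, mul_assoc]
    exact .cons e (ih h₂)

theorem Path.of_append {p r : A.State} {m : M} {w v : List X} (h : A.Path p m (w ++ v) r) :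
    ∃ q a b, A.Path p a w q ∧ A.Path q b v r ∧ m = a * b := by
  induction w generalizing p m with
  | nil => exact ⟨p, 1, m, .nil p, h, (one_mul m).symm⟩
  | cons x w ih =>
    rw [List.cons_append] at h
    cases h with
    | cons e hp =>
      obtain ⟨q, a, b, ha, hb, rfl⟩ := ih hp
      exact ⟨q, _, b, .cons e ha, hb, (mul_assoc _ _ _).symm⟩

theorem Path.exists_of_append {p q t : A.State} {a c : M} {u w : List X}
    (hu : A.Path p a u q) (h : A.Path p c (u ++ w) t) : ∃ b, c = a * b ∧ A.Path q b w t := by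
  obtain ⟨q', a', b, hu', hw, rfl⟩ := h.of_append
  obtain ⟨rfl, rfl⟩ := hu.unique hu'
  exact ⟨b, rfl, hw⟩

theorem exists_path_of_forall_exists_edge (hedge : ∀ p x, ∃ g q, A.edge p (g, x) q)
    (p : A.State) (w : List X) : ∃ m q, A.Path p m w q := by
  induction w generalizing p with
  | nil => exact ⟨1, p, .nil p⟩
  | cons x w ih =>
    obtain ⟨g, q, e⟩ := hedge p x
    obtain ⟨m, r, hp⟩ := ih q
    exact ⟨g * m, r, .cons e hp⟩

section WordProblem

variable {H : Type} [Group H] (φ : X → H)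

def ReachesByRelator (A : DetMAutomaton M X) (p q : A.State) : Prop :=
  ∃ v ∈ wordProblem φ, A.Path p 1 v q

theorem reachesByRelator_refl (p : A.State) : A.ReachesByRelator φ p p :=
  ⟨[], by simp, .nil p⟩

theorem reachesByRelator_trans {p q r : A.State} (hpq : A.ReachesByRelator φ p q)
    (hqr : A.ReachesByRelator φ q r) : A.ReachesByRelator φ p r := by
  obtain ⟨u, hu, hpu⟩ := hpq
  obtain ⟨v, hv, hpv⟩ := hqr
  exact ⟨u ++ v, by simp_all, by simpa using hpu.append hpv⟩

def loopSubmonoid (A : DetMAutomaton M X) (q : A.State) : Submonoid (H × M) where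
  carrier := {p | ∃ w, (w.map φ).prod = p.1 ∧ A.Path q p.2 w q}
  one_mem' := ⟨[], rfl, .nil q⟩
  mul_mem' := by
    rintro ⟨g, m⟩ ⟨g', m'⟩ ⟨w, rfl, hw⟩ ⟨w', rfl, hw'⟩
    exact ⟨w ++ w', by simp, hw.append hw'⟩

variable {φ} (hA : A.Lang = wordProblem φ) {q : A.State}
  (hq : A.ReachesByRelator φ A.init q)
include hA hq

theorem exists_path_one_of_mem_wordProblem {w : List X} (hw : w ∈ wordProblem φ) :
    ∃ t, A.Path q 1 w t := by
  obtain ⟨u, hu, hpu⟩ := hq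
  have huw : u ++ w ∈ A.Lang := by rw [hA]; simp_all
  obtain ⟨t, -, hp⟩ := huw
  obtain ⟨b, hb, hpw⟩ := hpu.exists_of_append hp
  rw [one_mul] at hb
  exact ⟨t, hb ▸ hpw⟩

theorem mem_wordProblem_of_path_one {w : List X} (hw : A.Path q 1 w q) : w ∈ wordProblem φ := by
  obtain ⟨u, hu, hpu⟩ := hq
  obtain ⟨t, ht, hpt⟩ : u ∈ A.Lang := by rw [hA]; exact hu
  obtain ⟨-, rfl⟩ := hpu.unique hpt
  have huw : u ++ w ∈ wordProblem φ := by rw [← hA]; exact ⟨q, ht, by simpa using hpu.append hw⟩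
  simpa [mem_wordProblem.1 hu] using huw

variable (hgen : ∀ h : H, ∃ w : List X, (w.map φ).prod = h)
include hgen

theorem exists_path_of_lang_eq_wordProblem (w : List X) : ∃ m t, A.Path q m w t := by
  obtain ⟨v, hv⟩ := hgen (w.map φ).prod⁻¹
  obtain ⟨t, hp⟩ := exists_path_one_of_mem_wordProblem hA hq (w := w ++ v) (by simp [hv])
  obtain ⟨r, m, -, hw, -⟩ := hp.of_append
  exact ⟨m, r, hw⟩

theorem exists_loop_of_paths (hret : ∀ r, A.ReachesByRelator φ q r → A.ReachesByRelator φ r q)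
    {t : A.State} {m m' : M} {w w' : List X} (hw : A.Path q m w t) (hw' : A.Path q m' w' t) :
    ∃ v n, (v.map φ).prod = (w.map φ).prod * (w'.map φ).prod⁻¹ ∧ A.Path q n v q := by
  obtain ⟨v, hv⟩ := hgen (w'.map φ).prod⁻¹
  obtain ⟨s, hs⟩ := exists_path_one_of_mem_wordProblem hA hq (w := w' ++ v) (by simp [hv])
  obtain ⟨b, -, hvs⟩ := hw'.exists_of_append hs
  obtain ⟨v₂, hv₂, hback⟩ := hret s ⟨_, by simp [hv], hs⟩
  exact ⟨w ++ v ++ v₂, _, by simp_all, (hw.append hvs).append hback⟩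

/-- Reading a word `v` with `w̄ v̄ = 1` after either loop gives a path labelled `1`, so both loop
labels are left inverses of the label of the `v`-path from `q`. -/
theorem label_eq_of_loops (hM : UniqueLeftInverses M) {a a' : M} {w w' : List X}
    (hw : A.Path q a w q) (hw' : A.Path q a' w' q) (he : (w.map φ).prod = (w'.map φ).prod) :
    a = a' := by
  obtain ⟨v, hv⟩ := hgen (w.map φ).prod⁻¹
  obtain ⟨t, ht⟩ := exists_path_one_of_mem_wordProblem hA hq (w := w ++ v) (by simp [hv])
  obtain ⟨t', ht'⟩ := exists_path_one_of_mem_wordProblem hA hq (w := w' ++ v) (by simp [hv, he])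
  obtain ⟨b, hb, hvt⟩ := hw.exists_of_append ht
  obtain ⟨b', hb', hvt'⟩ := hw'.exists_of_append ht'
  obtain ⟨rfl, -⟩ := hvt.unique hvt'
  exact hM b a a' hb.symm hb'.symm

end WordProblem

theorem exists_finiteIndex_injective_of_lang_eq_wordProblem {H : Type} [Group H] {φ : X → H}
    (hM : UniqueLeftInverses M) (hgen : ∀ h : H, ∃ w : List X, (w.map φ).prod = h)
    (hA : A.Lang = wordProblem φ) :
    ∃ K : Subgroup H, K.FiniteIndex ∧ ∃ f : K →* Mˣ, Function.Injective f := by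
  have := A.stateFintype
  obtain ⟨q, hq, hret⟩ := exists_rel_forall_rel_imp_rel_of_finite
    (reachesByRelator_refl φ) (fun _ _ _ => reachesByRelator_trans φ) A.init
  obtain ⟨K, hK, f, hf⟩ := (A.loopSubmonoid φ q).exists_subgroup_injective_toUnits
    (fun _ ⟨w, hw, hp⟩ => by
      obtain ⟨v, n, hv, hpv⟩ := exists_loop_of_paths hA hq hgen hret (.nil q) hp
      exact ⟨n, v, by simp [hv, hw], hpv⟩)
    (fun _ _ _ ⟨_, hw, hp⟩ ⟨_, hw', hp'⟩ =>
      label_eq_of_loops hA hq hgen hM hp hp' (hw.trans hw'.symm))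
    (fun _ ⟨_, hw, hp⟩ => hw.symm.trans (mem_wordProblem_of_path_one hA hq hp))
  refine ⟨K, ?_, f, hf⟩
  choose m t hp using exists_path_of_lang_eq_wordProblem hA hq hgen
  choose w hw using id hgen
  refine K.finiteIndex_of_eq_imp_inv_mul_mem (fun g => t (w g⁻¹)) fun g g' he => ?_
  obtain ⟨v, n, hv, hpv⟩ := exists_loop_of_paths hA hq hgen hret (hp (w g⁻¹)) (he ▸ hp (w g'⁻¹))
  exact (hK _).2 ⟨n, v, by simp [hv, hw], hpv⟩

end DetMAutomaton

section CosetAutomaton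

variable {M : Type} [Monoid M] {H : Type} [Group H] {X : Type} (φ : X → H) (K : Subgroup H)
  [K.FiniteIndex] (f : K →* Mˣ)

/-- `H ⧸ K` consists of left cosets, so letters act on states through `(φ x)⁻¹`. This is an
`abbrev` so that instance search sees `(cosetAutomaton φ K f).State` as `H ⧸ K`. -/
noncomputable abbrev cosetAutomaton : DetMAutomaton M X where
  State := H ⧸ K
  stateFintype := Fintype.ofFinite _
  init := ((1 : H) : H ⧸ K)
  terminal := {((1 : H) : H ⧸ K)}
  edge C p D := D = (φ p.2)⁻¹ • C ∧ ∃ k : K, (k : H) = C.out⁻¹ * φ p.2 * D.out ∧ p.1 = f k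
  det := by
    rintro C x g g' D D' ⟨rfl, k, hk, rfl⟩ ⟨rfl, k', hk', rfl⟩
    exact ⟨by rw [Subtype.ext (hk.trans hk'.symm)], rfl⟩

variable {φ K f}

theorem cosetAutomaton_exists_edge (C : H ⧸ K) (x : X) :
    ∃ g D, (cosetAutomaton φ K f).edge C (g, x) D := by
  have h : (((φ x)⁻¹ • C).out : H ⧸ K) = (φ x)⁻¹ • (C.out : H ⧸ K) := by
    rw [QuotientGroup.out_eq', QuotientGroup.out_eq']
  have hmem := (QuotientGroup.eq (a := (φ x)⁻¹ * C.out)).1 h.symm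
  rw [mul_inv_rev, inv_inv] at hmem
  exact ⟨_, _, rfl, ⟨_, hmem⟩, rfl, rfl⟩

theorem cosetAutomaton_path {C D : (cosetAutomaton φ K f).State} {m : M} {w : List X}
    (h : (cosetAutomaton φ K f).Path C m w D) :
    D = (w.map φ).prod⁻¹ • C ∧
      ∃ k : K, (k : H) = C.out⁻¹ * (w.map φ).prod * D.out ∧ m = f k := by
  induction h with
  | nil C => exact ⟨by simp, 1, by simp, by simp⟩
  | cons e _ ih =>
    obtain ⟨rfl, k, hk, rfl⟩ := e
    obtain ⟨rfl, k', hk', rfl⟩ := ih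
    refine ⟨by simp [mul_smul], k * k', ?_, by simp⟩
    simp only [Subgroup.coe_mul, hk, hk', List.map_cons, List.prod_cons]
    group

theorem lang_cosetAutomaton (hf : Function.Injective f) :
    (cosetAutomaton φ K f).Lang = wordProblem φ := by
  ext w
  constructor
  · rintro ⟨D, rfl, hp⟩
    obtain ⟨-, k, hk, h1⟩ := cosetAutomaton_path hp
    have hk1 : k = 1 := hf (Units.ext (by simpa using h1.symm))
    rw [hk1, OneMemClass.coe_one, eq_comm, mul_assoc, inv_mul_eq_one] at hk
    exact right_eq_mul.mp hk
  · intro hw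
    obtain ⟨m, D, hp⟩ :=
      DetMAutomaton.exists_path_of_forall_exists_edge (A := cosetAutomaton φ K f)
        cosetAutomaton_exists_edge ((1 : H) : H ⧸ K) w
    obtain ⟨hD, k, hk, rfl⟩ := cosetAutomaton_path hp
    rw [mem_wordProblem.1 hw, inv_one, one_smul] at hD
    subst hD
    have hk1 : k = 1 := Subtype.ext (by simpa [mem_wordProblem.1 hw] using hk)
    exact ⟨_, rfl, by simpa [hk1] using hp⟩

end CosetAutomaton

theorem wordProblem_accepted_detMAutomaton_iff_general
    {M : Type} [Monoid M] (hM : UniqueLeftInverses M)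
    {H : Type} [Group H] {X : Type} (φ : X → H)
    (hgen : ∀ h : H, ∃ w : List X, (w.map φ).prod = h) :
    (∃ A : DetMAutomaton M X, A.Lang = wordProblem φ) ↔
      (∃ K : Subgroup H, K.FiniteIndex ∧ ∃ f : K →* Mˣ, Function.Injective f) := by
  constructor
  · rintro ⟨A, hA⟩
    exact DetMAutomaton.exists_finiteIndex_injective_of_lang_eq_wordProblem hM hgen hA
  · rintro ⟨K, hK, f, hf⟩
    exact ⟨cosetAutomaton φ K f, lang_cosetAutomaton hf⟩

/-- **Kambites, Theorem 1.** Let `M` be a monoid with unique left inverses and `H` a finitely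
generated group, generated as a monoid by a finite set `X`. Then the word problem of `H` with
respect to `X` is accepted by a deterministic `M`-automaton if and only if `H` has a finite
index subgroup which embeds in the group of units of `M`. -/
theorem wordProblem_accepted_detMAutomaton_iff
    {M : Type} [Monoid M] (hM : UniqueLeftInverses M)
    {H : Type} [Group H] {X : Type} [Fintype X] (φ : X → H)
    (hgen : ∀ h : H, ∃ w : List X, (w.map φ).prod = h) :
    (∃ A : DetMAutomaton M X, A.Lang = wordProblem φ) ↔
      (∃ K : Subgroup H, K.FiniteIndex ∧ ∃ f : K →* Mˣ, Function.Injective f) :=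
  wordProblem_accepted_detMAutomaton_iff_general hM φ hgen
end

section
/- Let A be a TSM M-automaton over X accepting the subgroup Q ⊆ F, let q be a terminal state of A, and let A_q be the M-automaton obtained from A by changing the initial state to q. Then every word x ∈ X* accepted by A_q satisfies x̄ ∈ Q. -/
/-- A (nondeterministic) `M`-automaton over the alphabet `X`: a finite directed graph with
a distinguished initial state, a set of terminal states, and finitely many edges labelled by
pairs in `M × X*`. -/
structure MAutomaton (M : Type) [Monoid M] (X : Type) where
  State : Type
  [stateFintype : Fintype State]
  init : State
  terminal : Set State
  edge : State → M × List X → State → Prop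
  edgeFinite : {e : State × (M × List X) × State | edge e.1 e.2.1 e.2.2}.Finite

namespace MAutomaton

variable {M : Type} [Monoid M] {X : Type}

/-- `A.Path p m w q` means there is a path from `p` to `q` labelled `(m, w)`: the
concatenation in order of the `X*`-components of its edge labels is `w`, and the
`M`-components multiply in order to `m`. -/
inductive Path (A : MAutomaton M X) : A.State → M → List X → A.State → Prop
  | nil (p : A.State) : Path A p 1 [] p
  | cons {p q r : A.State} {g h : M} {u w : List X} :
      A.edge p (g, u) q → Path A q h w r → Path A p (g * h) (u ++ w) r

/-- The language accepted by an `M`-automaton: all words `w` such that some path labelled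
`(1, w)` leads from the initial state to a terminal state. -/
def Lang (A : MAutomaton M X) : Set (List X) :=
  {w | ∃ q ∈ A.terminal, A.Path A.init 1 w q}

/-- An `M`-automaton is *terminal state minimal* (TSM) if no `M`-automaton accepting the
same language has strictly fewer terminal states. -/
def TSM (A : MAutomaton M X) : Prop :=
  ∀ B : MAutomaton M X, B.Lang = A.Lang → Nat.card A.terminal ≤ Nat.card B.terminal

end MAutomaton

/-!
In a TSM automaton every terminal state `q` is reached from the initial state by a path labelled
`(1, w)`: otherwise `q` could be made non-terminal without changing the language, lowering the
number of terminal states. Then `w` is accepted, and so is `w x` for every `x` accepted from `q`;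
hence `w̄` and `w̄ x̄` lie in `Q`, and so does `x̄`.
-/

namespace MAutomaton

variable {M : Type} [Monoid M] {X : Type}

theorem Path.append {A : MAutomaton M X} {p s r : A.State} {m n : M} {u v : List X}
    (h₁ : A.Path p m u s) (h₂ : A.Path s n v r) : A.Path p (m * n) (u ++ v) r := by
  induction h₁ with
  | nil p => simpa using h₂
  | cons he _ ih =>
    rw [mul_assoc, List.append_assoc]
    exact .cons he (ih h₂)

theorem Path.of_same_edges {S : Type} {inst : Fintype S} {i i' : S} {T T' : Set S}
    {e : S → M × List X → S → Prop} {he he'} {p r : S} {m : M} {w : List X}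
    (h : (MAutomaton.mk S i T e he).Path p m w r) :
    (MAutomaton.mk S i' T' e he').Path p m w r :=
  Path.rec (A := MAutomaton.mk S i T e he)
    (motive := fun p m w r _ => (MAutomaton.mk S i' T' e he').Path p m w r)
    (fun p => Path.nil (A := MAutomaton.mk S i' T' e he') p)
    (fun hedge _ ih => Path.cons (A := MAutomaton.mk S i' T' e he') hedge ih) h

theorem path_withInit_iff (A : MAutomaton M X) (i : A.State) {p r : A.State} {m : M}
    {w : List X} : ({ A with init := i } : MAutomaton M X).Path p m w r ↔ A.Path p m w r :=
  ⟨Path.of_same_edges, Path.of_same_edges⟩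

theorem path_withTerminal_iff (A : MAutomaton M X) (T : Set A.State) {p r : A.State} {m : M}
    {w : List X} : ({ A with terminal := T } : MAutomaton M X).Path p m w r ↔ A.Path p m w r :=
  ⟨Path.of_same_edges, Path.of_same_edges⟩

theorem append_mem_lang {A : MAutomaton M X} {q : A.State} {w x : List X}
    (hw : A.Path A.init 1 w q) (hx : x ∈ ({ A with init := q } : MAutomaton M X).Lang) :
    w ++ x ∈ A.Lang := by
  obtain ⟨t, ht, hxt⟩ := hx
  exact ⟨t, ht, by simpa using hw.append ((A.path_withInit_iff q).mp hxt)⟩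

theorem lang_withTerminal_diff_singleton {A : MAutomaton M X} {q : A.State}
    (hq : ∀ w, ¬A.Path A.init 1 w q) :
    ({ A with terminal := A.terminal \ {q} } : MAutomaton M X).Lang = A.Lang := by
  ext w
  constructor
  · rintro ⟨t, ht, hwt⟩
    exact ⟨t, ht.1, (A.path_withTerminal_iff _).mp hwt⟩
  · rintro ⟨t, ht, hwt⟩
    have htq : t ≠ q := by
      rintro rfl
      exact hq w hwt
    exact ⟨t, ⟨ht, htq⟩, (A.path_withTerminal_iff _).mpr hwt⟩

theorem TSM.exists_path_of_mem_terminal {A : MAutomaton M X} (hA : A.TSM) {q : A.State}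
    (hq : q ∈ A.terminal) : ∃ w, A.Path A.init 1 w q := by
  by_contra! hunreach
  have hle := hA _ (lang_withTerminal_diff_singleton hunreach)
  have := A.stateFintype
  have hlt : (A.terminal \ {q}).ncard < A.terminal.ncard :=
    Set.ncard_sdiff_singleton_lt_of_mem hq A.terminal.toFinite
  simp only [Nat.card_coe_set_eq] at hle
  omega

end MAutomaton

theorem MAutomaton.changed_initial_accepts_subset_general
    {M : Type} [Monoid M] {F : Type} [Group F]
    {X : Type} (ι : X → F)
    (Q : Subgroup F) (A : MAutomaton M X)
    (hacc : A.Lang = {w : List X | (w.map ι).prod ∈ Q}) (hmin : A.TSM)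
    {q : A.State} (hq : q ∈ A.terminal) :
    ∀ x ∈ ({ A with init := q } : MAutomaton M X).Lang, (x.map ι).prod ∈ Q := by
  intro x hx
  obtain ⟨w, hw⟩ := hmin.exists_path_of_mem_terminal hq
  have hwx : w ++ x ∈ A.Lang := append_mem_lang hw hx
  have hw : w ∈ A.Lang := ⟨q, hq, hw⟩
  rw [hacc] at hw hwx
  rw [Set.mem_ofPred_eq, List.map_append, List.prod_append] at hwx
  exact (Q.mul_mem_cancel_left hw).mp hwx

/-- **Lemma 3, first part.** Let `A` be a TSM `M`-automaton accepting the subgroup `Q` of the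
free group `F` (generated as a monoid by `X`), let `q` be a terminal state of `A` and let
`A_q` be `A` with initial state changed to `q`. Then every word accepted by `A_q` represents
an element of `Q`. -/
theorem MAutomaton.changed_initial_accepts_subset
    {M : Type} [Monoid M] {F : Type} [Group F] [IsFreeGroup F]
    {X : Type} [Fintype X] (ι : X → F)
    (hgen : ∀ f : F, ∃ w : List X, (w.map ι).prod = f)
    (Q : Subgroup F) (A : MAutomaton M X)
    (hacc : A.Lang = {w : List X | (w.map ι).prod ∈ Q}) (hmin : A.TSM)
    {q : A.State} (hq : q ∈ A.terminal) :
    ∀ x ∈ ({ A with init := q } : MAutomaton M X).Lang, (x.map ι).prod ∈ Q :=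
  MAutomaton.changed_initial_accepts_subset_general ι Q A hacc hmin hq
end

section
/- Let A be a DTSM deterministic M-automaton over X accepting the subgroup Q ⊆ F, let q be a terminal state of A, and let A_q be the deterministic M-automaton obtained from A by changing the initial state to q. Then A_q accepts exactly the words x ∈ X* with x̄ ∈ Q, i.e. A_q also accepts the subset Q ⊆ F. -/
namespace DetMAutomaton

variable {M : Type} [Monoid M] {X : Type}

/-- Auxiliary: paths determined only by the edge relation. -/
inductive PathOn {S : Type} (e : S → M × X → S → Prop) : S → M → List X → S → Prop
  | nil (p : S) : PathOn e p 1 [] p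
  | cons {p q r : S} {g h : M} {x : X} {w : List X} :
      e p (g, x) q → PathOn e q h w r → PathOn e p (g * h) (x :: w) r

lemma path_iff_pathOn (A : DetMAutomaton M X) (p : A.State) (m : M) (w : List X)
    (r : A.State) : A.Path p m w r ↔ PathOn A.edge p m w r := by
  constructor
  · intro h
    induction h with
    | nil p => exact PathOn.nil p
    | cons e _ ih => exact PathOn.cons e ih
  · intro h
    induction h with
    | nil p => exact Path.nil p
    | cons e _ ih => exact Path.cons e ih

lemma path_set_init (A : DetMAutomaton M X) (q0 : A.State) (p : A.State) (m : M)
    (w : List X) (r : A.State) :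
    ({ A with init := q0 } : DetMAutomaton M X).Path p m w r ↔ A.Path p m w r :=
  (path_iff_pathOn ({ A with init := q0 } : DetMAutomaton M X) p m w r).trans
    (path_iff_pathOn A p m w r).symm

lemma path_set_terminal (A : DetMAutomaton M X) (T : Set A.State) (p : A.State) (m : M)
    (w : List X) (r : A.State) :
    ({ A with terminal := T } : DetMAutomaton M X).Path p m w r ↔ A.Path p m w r :=
  (path_iff_pathOn ({ A with terminal := T } : DetMAutomaton M X) p m w r).trans
    (path_iff_pathOn A p m w r).symm

lemma path_append {A : DetMAutomaton M X} {p q r : A.State} {g h : M} {u v : List X}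
    (h1 : A.Path p g u q) (h2 : A.Path q h v r) : A.Path p (g * h) (u ++ v) r := by
  induction h1 with
  | nil => simpa using h2
  | cons e _ ih => rw [mul_assoc]; exact Path.cons e (ih h2)

lemma path_split {A : DetMAutomaton M X} {p r : A.State} {m : M} {u v : List X}
    (h : A.Path p m (u ++ v) r) :
    ∃ q g h', m = g * h' ∧ A.Path p g u q ∧ A.Path q h' v r := by
  induction u generalizing p m with
  | nil => exact ⟨p, 1, m, by simp, Path.nil p, h⟩
  | cons x u ih =>
    cases h with
    | cons e hp =>
      obtain ⟨q, g', h', rfl, h1, h2⟩ := ih hp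
      exact ⟨q, _ * g', h', (mul_assoc _ _ _).symm, Path.cons e h1, h2⟩

lemma path_unique {A : DetMAutomaton M X} {p q r : A.State} {g h : M} {w : List X}
    (h1 : A.Path p g w q) (h2 : A.Path p h w r) : g = h ∧ q = r := by
  induction h1 generalizing h r with
  | nil => cases h2; exact ⟨rfl, rfl⟩
  | cons e _ ih =>
    cases h2 with
    | cons e' hp' =>
      obtain ⟨rfl, rfl⟩ := A.det e e'
      obtain ⟨rfl, rfl⟩ := ih hp'
      exact ⟨rfl, rfl⟩

end DetMAutomaton

/-- **Lemma 3, second part.** Let `A` be a DTSM deterministic `M`-automaton accepting the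
subgroup `Q` of the free group `F` (generated as a monoid by `X`), let `q` be a terminal
state of `A` and let `A_q` be `A` with initial state changed to `q`. Then `A_q` accepts
exactly the words representing elements of `Q`. -/
theorem DetMAutomaton.changed_initial_accepts
    {M : Type} [Monoid M] {F : Type} [Group F] [IsFreeGroup F]
    {X : Type} [Fintype X] (ι : X → F)
    (hgen : ∀ f : F, ∃ w : List X, (w.map ι).prod = f)
    (Q : Subgroup F) (A : DetMAutomaton M X)
    (hacc : A.Lang = {w : List X | (w.map ι).prod ∈ Q}) (hmin : A.DTSM)
    {q : A.State} (hq : q ∈ A.terminal) :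
    ({ A with init := q } : DetMAutomaton M X).Lang = {x : List X | (x.map ι).prod ∈ Q} := by
  haveI := A.stateFintype
  -- Step 1: there is a word `u` with a path labelled `(1, u)` from `A.init` to `q`.
  have hex : ∃ u : List X, A.Path A.init 1 u q := by
    by_contra hno
    push_neg at hno
    have hlang : ({ A with terminal := A.terminal \ {q} } : DetMAutomaton M X).Lang
        = A.Lang := by
      ext w
      constructor
      · rintro ⟨t, ht, hp⟩
        exact ⟨t, ht.1, (A.path_set_terminal _ _ _ _ _).1 hp⟩
      · rintro ⟨t, ht, hp⟩
        have htq : t ≠ q := by rintro rfl; exact hno w hp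
        exact ⟨t, ⟨ht, htq⟩, (A.path_set_terminal _ _ _ _ _).2 hp⟩
    have hle := hmin _ hlang
    have hlt : Nat.card ↥(A.terminal \ {q}) < Nat.card ↥A.terminal := by
      rw [Nat.card_coe_set_eq, Nat.card_coe_set_eq]
      exact Set.ncard_diff_singleton_lt_of_mem hq (Set.toFinite _)
    exact absurd hle (not_le.mpr hlt)
  obtain ⟨u, hu⟩ := hex
  have huQ : (u.map ι).prod ∈ Q := by
    have : u ∈ A.Lang := ⟨q, hq, hu⟩
    rwa [hacc] at this
  ext x
  show (∃ t ∈ A.terminal, ({ A with init := q } : DetMAutomaton M X).Path q 1 x t) ↔ _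
  constructor
  · rintro ⟨t, ht, hp⟩
    have hp' : A.Path q 1 x t := (A.path_set_init _ _ _ _ _).1 hp
    have hcat : A.Path A.init (1 * 1) (u ++ x) t := DetMAutomaton.path_append hu hp'
    rw [one_mul] at hcat
    have hmem : u ++ x ∈ A.Lang := ⟨t, ht, hcat⟩
    rw [hacc] at hmem
    simp only [Set.mem_setOf_eq, List.map_append, List.prod_append] at hmem ⊢
    have := mul_mem (inv_mem huQ) hmem
    rwa [← mul_assoc, inv_mul_cancel, one_mul] at this
  · intro hx
    simp only [Set.mem_setOf_eq] at hx
    have hmem : u ++ x ∈ A.Lang := by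
      rw [hacc]
      simp only [Set.mem_setOf_eq, List.map_append, List.prod_append]
      exact mul_mem huQ hx
    obtain ⟨t, ht, hp⟩ := hmem
    obtain ⟨q', g, h', hm, h1, h2⟩ := DetMAutomaton.path_split hp
    obtain ⟨rfl, rfl⟩ := DetMAutomaton.path_unique hu h1
    rw [one_mul] at hm
    rw [← hm] at h2
    exact ⟨t, ht, (A.path_set_init _ _ _ _ _).2 h2⟩
end

section
/- Let A be a DTSM deterministic M-automaton over X accepting the subgroup Q ⊆ F. Then the set of all words w ∈ X* such that (1, w) labels a path in A from some terminal state to some terminal state is exactly the set {w ∈ X* : w̄ ∈ Q}. -/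
theorem DetMAutomaton.Path.append' {M : Type} [Monoid M] {X : Type}
    {A : DetMAutomaton M X} {p q r : A.State} {m n : M} {u v : List X}
    (h1 : A.Path p m u q) (h2 : A.Path q n v r) :
    A.Path p (m * n) (u ++ v) r := by
  induction h1 with
  | nil p => simpa using h2
  | cons e _ ih =>
      rw [mul_assoc]
      exact DetMAutomaton.Path.cons e (ih h2)

theorem DetMAutomaton.Path.eq_of_nil {M : Type} [Monoid M] {X : Type}
    {A : DetMAutomaton M X} {p q : A.State} {m : M} {w : List X}
    (h : A.Path p m w q) (hw : w = []) : q = p := by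
  cases h with
  | nil => rfl
  | cons e hp => simp at hw

/-- The automaton `A` with its terminal set replaced by `S`. -/
def DetMAutomaton.restrictTerminal {M : Type} [Monoid M] {X : Type}
    (A : DetMAutomaton M X) (S : Set A.State) : DetMAutomaton M X :=
  { State := A.State, stateFintype := A.stateFintype, init := A.init,
    terminal := S, edge := A.edge, det := A.det }

theorem DetMAutomaton.path_restrict {M : Type} [Monoid M] {X : Type}
    {A : DetMAutomaton M X} {S : Set A.State} {p q : A.State} {m : M} {w : List X} :
    (A.restrictTerminal S).Path p m w q ↔ A.Path p m w q := by
  constructor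
  · intro h
    exact DetMAutomaton.Path.rec (A := A.restrictTerminal S)
      (motive := fun p m w q _ => A.Path p m w q)
      (fun p => DetMAutomaton.Path.nil (A := A) p)
      (fun e _ ih => DetMAutomaton.Path.cons (A := A) e ih) h
  · intro h
    exact DetMAutomaton.Path.rec (A := A)
      (motive := fun p m w q _ => (A.restrictTerminal S).Path p m w q)
      (fun p => DetMAutomaton.Path.nil (A := A.restrictTerminal S) p)
      (fun e _ ih => DetMAutomaton.Path.cons (A := A.restrictTerminal S) e ih) h

/-- **Corollary 4.** Let `A` be a DTSM deterministic `M`-automaton accepting the subgroup `Q`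
of the free group `F` (generated as a monoid by `X`). Then the set of words `w` such that
`(1, w)` labels a path between two terminal states is exactly the membership language of `Q`. -/
theorem DetMAutomaton.between_terminals_eq_membership
    {M : Type} [Monoid M] {F : Type} [Group F] [IsFreeGroup F]
    {X : Type} [Fintype X] (ι : X → F)
    (hgen : ∀ f : F, ∃ w : List X, (w.map ι).prod = f)
    (Q : Subgroup F) (A : DetMAutomaton M X)
    (hacc : A.Lang = {w : List X | (w.map ι).prod ∈ Q}) (hmin : A.DTSM) :
    {w : List X | ∃ p ∈ A.terminal, ∃ r ∈ A.terminal, A.Path p 1 w r} =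
      {w : List X | (w.map ι).prod ∈ Q} := by
  classical
  haveI := A.stateFintype
  -- the initial state is terminal
  have hinit : A.init ∈ A.terminal := by
    have h0 : ([] : List X) ∈ A.Lang := by
      rw [hacc]; simpa using Q.one_mem
    obtain ⟨q, hq, hp⟩ := h0
    rwa [hp.eq_of_nil rfl] at hq
  -- every terminal state is reachable from init by a path labelled (1, u)
  have hreach : ∀ t ∈ A.terminal, ∃ u : List X, A.Path A.init 1 u t := by
    intro t ht
    by_contra hno
    push_neg at hno
    have hlang : (A.restrictTerminal (A.terminal \ {t})).Lang = A.Lang := by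
      ext w
      constructor
      · rintro ⟨q, hq, hp⟩
        exact ⟨q, hq.1, DetMAutomaton.path_restrict.1 hp⟩
      · rintro ⟨q, hq, hp⟩
        refine ⟨q, ⟨hq, ?_⟩, DetMAutomaton.path_restrict.2 hp⟩
        intro hmem
        rw [Set.mem_singleton_iff] at hmem
        subst hmem
        exact hno w hp
    have hle := hmin _ hlang
    have hlt : Nat.card ↥(A.restrictTerminal (A.terminal \ {t})).terminal
        < Nat.card ↥A.terminal := by
      show Nat.card ↥(A.terminal \ {t}) < Nat.card ↥A.terminal
      rw [Nat.card_coe_set_eq, Nat.card_coe_set_eq]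
      exact Set.ncard_diff_singleton_lt_of_mem ht A.terminal.toFinite
    omega
  ext w
  simp only [Set.mem_setOf_eq]
  constructor
  · rintro ⟨p, hp, r, hr, hpr⟩
    obtain ⟨u, hu⟩ := hreach p hp
    have hcat : (u ++ w) ∈ A.Lang := ⟨r, hr, by simpa using hu.append' hpr⟩
    have humem : u ∈ A.Lang := ⟨p, hp, hu⟩
    rw [hacc] at hcat humem
    simp only [Set.mem_setOf_eq, List.map_append, List.prod_append] at hcat humem
    exact (Q.mul_mem_cancel_left humem).mp hcat
  · intro hw
    have hmem : w ∈ A.Lang := by rw [hacc]; exact hw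
    obtain ⟨r, hr, hp⟩ := hmem
    exact ⟨A.init, hinit, r, hr, hp⟩
end

section
/- The group ℤ³ has no subgroup of finite index that admits an injective group homomorphism into F₃ × F₃, where F₃ is the free group of rank 3. -/
/-!
Compose `ℤ³ → K` (`x ↦ x ^ [ℤ³ : K]`) with the embedding of `K` into `F₃ × F₃`. Each coordinate
projection has an abelian image in `F₃`, which is free by Nielsen–Schreier, hence free of rank at
most one, hence embeds in `ℤ`. This yields an injective homomorphism `ℤ³ → ℤ²`, which is
impossible by comparing ranks.
-/

open Function

theorem FreeGroup.exists_injective_multiplicativeInt {α : Type*} [Subsingleton α] :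
    ∃ j : FreeGroup α →* Multiplicative ℤ, Injective j := by
  cases isEmpty_or_nonempty α with
  | inl _ => exact ⟨1, injective_of_subsingleton _⟩
  | inr h =>
    have := uniqueOfSubsingleton h.some
    exact ⟨mulEquivIntOfUnique.toMonoidHom, mulEquivIntOfUnique.injective⟩

namespace IsFreeGroup

variable {G : Type*} [Group G] [IsFreeGroup G]

theorem subsingleton_generators_of_commute (hG : ∀ x y : G, Commute x y) :
    Subsingleton (Generators G) := by
  by_contra hne
  obtain ⟨a, b, hab⟩ := not_subsingleton_iff_nontrivial.mp hne
  classical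
  let φ : G →* Equiv.Perm (Fin 3) := lift fun x => if x = a then .swap 0 1 else .swap 1 2
  have hφ := (hG (of a) (of b)).map φ
  simp only [φ, lift_of, ↓reduceIte, if_neg hab.symm, commute_iff_eq] at hφ
  exact absurd hφ (by decide)

theorem exists_injective_multiplicativeInt_of_commute (hG : ∀ x y : G, Commute x y) :
    ∃ j : G →* Multiplicative ℤ, Injective j := by
  have := subsingleton_generators_of_commute hG
  obtain ⟨j, hj⟩ := FreeGroup.exists_injective_multiplicativeInt (α := Generators G)
  exact ⟨j.comp (toFreeGroup G).toMonoidHom, hj.comp (toFreeGroup G).injective⟩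

theorem exists_ker_eq_of_commGroup {A : Type*} [CommGroup A] (p : A →* G) :
    ∃ j : A →* Multiplicative ℤ, j.ker = p.ker := by
  have hcomm : ∀ x y : p.range, Commute x y := by
    rintro ⟨_, a, rfl⟩ ⟨_, b, rfl⟩
    exact Subtype.ext ((Commute.all a b).map p)
  -- `p.range` is free by Nielsen–Schreier (`subgroupIsFreeOfIsFree`).
  obtain ⟨j, hj⟩ := exists_injective_multiplicativeInt_of_commute hcomm
  refine ⟨j.comp p.rangeRestrict, ?_⟩
  rw [MonoidHom.ker_comp_of_injective _ _ hj, MonoidHom.ker_rangeRestrict]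

theorem exists_injective_multiplicativeInt_prod_of_injective {A G' : Type*} [CommGroup A]
    [Group G'] [IsFreeGroup G'] (f : A →* G × G') (hf : Injective f) :
    ∃ g : A →* Multiplicative ℤ × Multiplicative ℤ, Injective g := by
  obtain ⟨j₁, hj₁⟩ := exists_ker_eq_of_commGroup ((MonoidHom.fst G G').comp f)
  obtain ⟨j₂, hj₂⟩ := exists_ker_eq_of_commGroup ((MonoidHom.snd G G').comp f)
  refine ⟨j₁.prod j₂, (MonoidHom.ker_eq_bot_iff _).mp ?_⟩
  rw [MonoidHom.ker_prod, hj₁, hj₂, ← MonoidHom.ker_prod, MonoidHom.prod_unique]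
  exact (MonoidHom.ker_eq_bot_iff f).mpr hf

end IsFreeGroup

theorem Subgroup.exists_injective_of_finiteIndex {G : Type*} [CommGroup G] [IsMulTorsionFree G]
    (K : Subgroup G) [K.FiniteIndex] : ∃ e : G →* K, Injective e :=
  ⟨(powMonoidHom K.index).codRestrict K K.pow_index_mem,
    fun _ _ h => pow_left_injective FiniteIndex.index_ne_zero (congrArg Subtype.val h)⟩

theorem Module.finrank_int_le_of_injective_multiplicative {M N : Type*} [AddCommGroup M]
    [AddCommGroup N] [Module.Finite ℤ N] (φ : Multiplicative M →* Multiplicative N)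
    (hφ : Function.Injective φ) : finrank ℤ M ≤ finrank ℤ N :=
  LinearMap.finrank_le_finrank_of_injective
    (f := (AddMonoidHom.toMultiplicative.symm φ).toIntLinearMap) hφ

/-- `ℤ³` has no finite index subgroup admitting an injective group homomorphism into
`F₃ × F₃`, where `F₃` is the free group of rank 3. -/
theorem Z3_no_finite_index_subgroup_embeds_F3xF3 :
    ¬ ∃ K : Subgroup (Multiplicative (Fin 3 → ℤ)), K.FiniteIndex ∧
      ∃ f : K →* FreeGroup (Fin 3) × FreeGroup (Fin 3), Function.Injective f := by
  rintro ⟨K, hK, f, hf⟩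
  obtain ⟨e, he⟩ := K.exists_injective_of_finiteIndex
  obtain ⟨g, hg⟩ :=
    IsFreeGroup.exists_injective_multiplicativeInt_prod_of_injective (f.comp e) (hf.comp he)
  let toIntProd := (MulEquiv.prodMultiplicative ℤ ℤ).symm
  have hrank := Module.finrank_int_le_of_injective_multiplicative
    (toIntProd.toMonoidHom.comp g) (toIntProd.injective.comp hg)
  simp [Module.finrank_prod] at hrank
end
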